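/- Bailey pair #2 (shifted Slater A2): The sequences β_n = 1/(q²;q)_{2n} and α_m defined by α_m = ((1 − q^{2m+2})/(1 − q²)) · c_m, where c_m = q^{(2m²+m)/3} if m ≡ 0 (mod 3), c_m = −q^{(2m²+m)/3} if m ≡ 1 (mod 3), and c_m = 0 if m ≡ 2 (mod 3), form a Bailey pair with respect to base a = q². -/

import Mathlib

open Finset

noncomputable def qPoch (a q : ℂ) (n : ℕ) : ℂ :=
  ∏ t ∈ Finset.range n, (1 - a * q ^ t)

noncomputable def qPochInf (a q : ℂ) : ℂ :=
  ∏' t : ℕ, (1 - a * q ^ t)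

def IsBaileyPair (q a : ℂ) (α β : ℕ → ℂ) : Prop :=
  ∀ n : ℕ, β n =
    ∑ t ∈ Finset.range (n + 1), α t / (qPoch q q (n - t) * qPoch (a * q) q (n + t))

/-!
Clearing denominators with Gaussian binomial coefficients `[N; k]`, the Bailey relation at `n`
becomes `∑ₜ c_t ([2n+1; n-t] - q^(2t+2) [2n+1; n-t-1]) = 1`. Grouping `t = 3k, 3k+1` and using
the symmetry `[N; k] = [N; N-k]`, the left side is Andrews' finite form of Euler's pentagonal
number theorem, `∑_{s ∈ ℤ} (-1)^s q^(s(3s+1)/2) [N; ⌊(N-3s)/2⌋] = 1`, at `N = 2n+1`. That identity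
holds for every `N` by induction: going from `N` to `N+1` with the two `q`-Pascal rules, the
remainder terms of `s` and `s+1` cancel whenever `s ≡ N (mod 2)`.
-/

theorem qPoch_succ (a q : ℂ) (m : ℕ) : qPoch a q (m + 1) = qPoch a q m * (1 - a * q ^ m) :=
  prod_range_succ _ _

theorem qPoch_add (a q : ℂ) (j m : ℕ) :
    qPoch a q j * qPoch (a * q ^ j) q m = qPoch a q (j + m) := by
  simp only [qPoch, prod_range_add, mul_assoc, ← pow_add]

theorem one_sub_ne_zero_of_norm_lt_one {R : Type*} [NormedRing R] [NormOneClass R] {z : R}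
    (hz : ‖z‖ < 1) : 1 - z ≠ 0 := fun h => by
  rw [← eq_of_sub_eq_zero h, norm_one] at hz
  exact hz.false

theorem qPoch_ne_zero {a q : ℂ} (ha : ‖a‖ < 1) (hq : ‖q‖ ≤ 1) (m : ℕ) :
    qPoch a q m ≠ 0 :=
  prod_ne_zero_iff.mpr fun t _ => one_sub_ne_zero_of_norm_lt_one <| by
    rw [norm_mul, norm_pow]
    exact (mul_le_of_le_one_right (norm_nonneg a) (pow_le_one₀ (norm_nonneg q) hq)).trans_lt ha

section QBinomial

variable {q : ℂ}

/-- Gaussian binomial coefficients `[N; k]`, defined by the `q`-Pascal rule; `k` ranges over `ℤ`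
so that `[N; k] = 0` outside `0 ≤ k ≤ N` without special cases. -/
noncomputable def qBinom (q : ℂ) : ℕ → ℤ → ℂ
  | 0, k => if k = 0 then 1 else 0
  | N + 1, k => qBinom q N (k - 1) + q ^ k.toNat * qBinom q N k

theorem qBinom_succ (N : ℕ) (k : ℤ) :
    qBinom q (N + 1) k = qBinom q N (k - 1) + q ^ k.toNat * qBinom q N k := rfl

theorem qBinom_eq_zero : ∀ {N : ℕ} {k : ℤ}, k < 0 ∨ N < k → qBinom q N k = 0
  | 0, k, h => if_neg (by omega)
  | N + 1, k, h => by
    rw [qBinom_succ, qBinom_eq_zero (by omega), qBinom_eq_zero (N := N) (k := k) (by omega),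
      mul_zero, add_zero]

theorem nonneg_and_le_of_qBinom_ne_zero {N : ℕ} {k : ℤ} (h : qBinom q N k ≠ 0) :
    0 ≤ k ∧ k ≤ N := by
  by_contra h'
  exact h (qBinom_eq_zero (by omega))

theorem qBinom_mul_qPoch : ∀ (N k : ℕ), k ≤ N →
    qBinom q N k * (qPoch q q k * qPoch q q (N - k)) = qPoch q q N
  | 0, k, hk => by
    obtain rfl : k = 0 := by omega
    simp [qBinom, qPoch]
  | N + 1, k, hk => by
    have ih := qBinom_mul_qPoch N
    have h₁ : qBinom q N (k - 1) * (qPoch q q k * qPoch q q (N + 1 - k))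
        = (1 - q ^ k) * qPoch q q N := by
      rcases k with _ | k
      · simp [qBinom_eq_zero]
      · rw [← ih k (by omega), Nat.cast_succ, add_sub_cancel_right, qPoch_succ, ← pow_succ',
          show N + 1 - (k + 1) = N - k by omega]
        ring
    have h₂ : qBinom q N k * (qPoch q q k * qPoch q q (N + 1 - k))
        = (1 - q ^ (N + 1 - k)) * qPoch q q N := by
      rcases (show k = N + 1 ∨ k ≤ N by omega) with rfl | hkN
      · simp [qBinom_eq_zero]
      · rw [← ih k hkN, show N + 1 - k = N - k + 1 by omega, qPoch_succ, ← pow_succ']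
        ring
    rw [qBinom_succ, Int.toNat_natCast, qPoch_succ, ← pow_succ', add_mul, h₁, mul_assoc, h₂]
    have hpow : q ^ k * q ^ (N + 1 - k) = q ^ (N + 1) := by rw [← pow_add, Nat.add_sub_cancel' hk]
    linear_combination (-qPoch q q N) * hpow

variable (hq : ‖q‖ < 1)
include hq

theorem qBinom_symm (N : ℕ) (k : ℤ) : qBinom q N (N - k) = qBinom q N k := by
  rcases (show (k < 0 ∨ N < k) ∨ (0 ≤ k ∧ k ≤ N) by omega) with hk | ⟨hk₀, hkN⟩
  · rw [qBinom_eq_zero hk, qBinom_eq_zero (by omega)]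
  lift k to ℕ using hk₀
  have hpos (m : ℕ) := qPoch_ne_zero hq hq.le m
  refine mul_right_cancel₀ (mul_ne_zero (hpos k) (hpos (N - k))) ?_
  have h := qBinom_mul_qPoch (q := q) N (N - k) (by omega)
  rw [Nat.sub_sub_self (by omega), Nat.cast_sub (by omega)] at h
  rw [qBinom_mul_qPoch N k (by omega), mul_comm (qPoch q q k), h]

theorem qBinom_succ' (N : ℕ) (k : ℤ) :
    qBinom q (N + 1) k = q ^ (N + 1 - k).toNat * qBinom q N (k - 1) + qBinom q N k := by
  rw [← qBinom_symm hq, qBinom_succ, ← qBinom_symm hq N k, ← qBinom_symm hq N (k - 1)]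
  push_cast
  ring_nf

theorem qBinom_sub_one_mul (N k : ℕ) (hk : k ≤ N) :
    qBinom q N (k - 1) * (1 - q ^ (N + 1 - k)) = qBinom q N k * (1 - q ^ k) := by
  rcases k with _ | k
  · simp [qBinom_eq_zero]
  have hpos (m : ℕ) := qPoch_ne_zero hq hq.le m
  refine mul_right_cancel₀ (mul_ne_zero (hpos k) (hpos (N - (k + 1)))) ?_
  have h₁ := qBinom_mul_qPoch (q := q) N k (by omega)
  have h₂ := qBinom_mul_qPoch (q := q) N (k + 1) hk
  rw [show N - k = N - (k + 1) + 1 by omega, qPoch_succ, ← pow_succ'] at h₁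
  rw [qPoch_succ, ← pow_succ', Nat.cast_succ] at h₂
  rw [show N + 1 - (k + 1) = N - (k + 1) + 1 by omega, Nat.cast_succ, add_sub_cancel_right]
  linear_combination h₁ - h₂

end QBinomial

theorem pow_toNat_mul_pow_toNat_eq {M : Type*} [Monoid M] (x : M) {a b c d : ℤ} (ha : 0 ≤ a)
    (hb : 0 ≤ b) (hc : 0 ≤ c) (hd : 0 ≤ d) (h : a + b = c + d) :
    x ^ a.toNat * x ^ b.toNat = x ^ c.toNat * x ^ d.toNat := by
  rw [← pow_add, ← pow_add]
  congr 1
  omega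

theorem finsum_eq_zero_of_pairs {M : Type*} [AddCommMonoid M] {g : ℤ → M}
    (hg : (Function.support g).Finite) (a : ℤ)
    (h : ∀ j, g (2 * j + a) + g (2 * j + a + 1) = 0) : ∑ᶠ s, g s = 0 := by
  let σ : ℤ → ℤ := fun s => if (s - a) % 2 = 0 then s + 1 else s - 1
  have hσσ (s : ℤ) : σ (σ s) = s := by simp only [σ]; split_ifs <;> omega
  let S := hg.toFinset ∪ hg.toFinset.image σ
  rw [finsum_eq_sum_of_support_subset g (s := S) (by simp [S])]
  refine sum_involution (fun s _ => σ s) (fun s _ => ?_) (fun s _ _ => ?_) (fun s hs => ?_)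
    (fun s _ => hσσ s)
  · simp only [σ]
    split_ifs with hs
    · rw [show s = 2 * ((s - a) / 2) + a by omega]
      exact h _
    · rw [show s = 2 * ((s - a) / 2) + a + 1 by omega, add_sub_cancel_right, add_comm]
      exact h _
  · simp only [σ]; split_ifs <;> omega
  · simp only [S, mem_union, mem_image] at hs ⊢
    rcases hs with hs | ⟨t, ht, rfl⟩
    · exact Or.inr ⟨s, hs, rfl⟩
    · exact Or.inl (by rwa [hσσ])

section Pentagonal

variable {q : ℂ}

noncomputable def pent (q : ℂ) (s : ℤ) : ℂ :=
  (-1) ^ s.natAbs * q ^ (s * (3 * s + 1) / 2).toNat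

theorem pent_two_mul (j : ℤ) : pent q (2 * j) = q ^ (j * (6 * j + 1)).toNat := by
  rw [pent, Int.natAbs_mul, show Int.natAbs 2 = 2 from rfl, (even_two_mul _).neg_one_pow, one_mul,
    show 2 * j * (3 * (2 * j) + 1) = 2 * (j * (6 * j + 1)) by ring,
    Int.mul_ediv_cancel_left _ two_ne_zero]

theorem pent_two_mul_add_one (j : ℤ) :
    pent q (2 * j + 1) = -q ^ ((2 * j + 1) * (3 * j + 2)).toNat := by
  have hodd : Odd (2 * j + 1).natAbs := Int.natAbs_odd.mpr (odd_two_mul_add_one j)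
  rw [pent, hodd.neg_one_pow, neg_one_mul,
    show (2 * j + 1) * (3 * (2 * j + 1) + 1) = 2 * ((2 * j + 1) * (3 * j + 2)) by ring,
    Int.mul_ediv_cancel_left _ two_ne_zero]

theorem pent_exponent_nonneg (j : ℤ) :
    0 ≤ j * (6 * j + 1) ∧ 0 ≤ (2 * j + 1) * (3 * j + 2) := by
  constructor <;> rcases le_or_gt 0 j with h | h <;> nlinarith

noncomputable def pentTerm (q : ℂ) (N : ℕ) (s : ℤ) : ℂ :=
  pent q s * qBinom q N ((N - 3 * s) / 2)

theorem support_pentTerm_subset (N : ℕ) :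
    Function.support (pentTerm q N) ⊆ Set.Icc (-(N : ℤ)) N := fun s hs => by
  have := nonneg_and_le_of_qBinom_ne_zero (right_ne_zero_of_mul hs)
  simp only [Set.mem_Icc]
  omega

theorem support_pentTerm_finite (N : ℕ) : (Function.support (pentTerm q N)).Finite :=
  (Set.finite_Icc _ _).subset (support_pentTerm_subset N)

variable (hq : ‖q‖ < 1)
include hq

theorem pentTerm_pair_even (n : ℕ) (j : ℤ) :
    pentTerm q (2 * n + 1) (2 * j) - pentTerm q (2 * n) (2 * j)
      + (pentTerm q (2 * n + 1) (2 * j + 1) - pentTerm q (2 * n) (2 * j + 1)) = 0 := by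
  have hP₂ := qBinom_succ' hq (2 * n) (n - 3 * j)
  have hP₁ := qBinom_succ (q := q) (2 * n) (n - 3 * j - 1)
  simp only [pentTerm, pent_two_mul, pent_two_mul_add_one]
  push_cast at hP₂ hP₁ ⊢
  rw [show ((2 * n + 1 : ℤ) - 3 * (2 * j)) / 2 = n - 3 * j by omega,
    show ((2 * n : ℤ) - 3 * (2 * j)) / 2 = n - 3 * j by omega,
    show ((2 * n + 1 : ℤ) - 3 * (2 * j + 1)) / 2 = n - 3 * j - 1 by omega,
    show ((2 * n : ℤ) - 3 * (2 * j + 1)) / 2 = n - 3 * j - 1 - 1 by omega]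
  have hcancel : (q ^ (j * (6 * j + 1)).toNat * q ^ (2 * n + 1 - (n - 3 * j) : ℤ).toNat
      - q ^ ((2 * j + 1) * (3 * j + 2)).toNat * q ^ (n - 3 * j - 1 : ℤ).toNat)
        * qBinom q (2 * n) (n - 3 * j - 1) = 0 := by
    rcases eq_or_ne (qBinom q (2 * n) (n - 3 * j - 1)) 0 with hG | hG
    · rw [hG, mul_zero]
    have := nonneg_and_le_of_qBinom_ne_zero hG
    obtain ⟨h₁, h₂⟩ := pent_exponent_nonneg j
    rw [sub_eq_zero.mpr (pow_toNat_mul_pow_toNat_eq q h₁ (by omega) h₂ (by omega) (by ring)),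
      zero_mul]
  linear_combination q ^ (j * (6 * j + 1)).toNat * hP₂
    - q ^ ((2 * j + 1) * (3 * j + 2)).toNat * hP₁ + hcancel

theorem pentTerm_pair_odd (n : ℕ) (j : ℤ) :
    pentTerm q (2 * n + 2) (2 * j + 1) - pentTerm q (2 * n + 1) (2 * j + 1)
      + (pentTerm q (2 * n + 2) (2 * j + 2) - pentTerm q (2 * n + 1) (2 * j + 2)) = 0 := by
  have hP₂ := qBinom_succ' hq (2 * n + 1) (n - 3 * j - 1)
  have hP₁ := qBinom_succ (q := q) (2 * n + 1) (n - 3 * j - 1 - 1)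
  simp only [pentTerm, show 2 * j + 2 = 2 * (j + 1) by ring, pent_two_mul, pent_two_mul_add_one]
  push_cast at hP₂ hP₁ ⊢
  rw [show ((2 * n + 2 : ℤ) - 3 * (2 * j + 1)) / 2 = n - 3 * j - 1 by omega,
    show ((2 * n + 1 : ℤ) - 3 * (2 * j + 1)) / 2 = n - 3 * j - 1 by omega,
    show ((2 * n + 2 : ℤ) - 3 * (2 * (j + 1))) / 2 = n - 3 * j - 1 - 1 by omega,
    show ((2 * n + 1 : ℤ) - 3 * (2 * (j + 1))) / 2 = n - 3 * j - 1 - 1 - 1 by omega]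
  have hcancel : (q ^ ((2 * j + 1) * (3 * j + 2)).toNat
        * q ^ (2 * n + 1 + 1 - (n - 3 * j - 1) : ℤ).toNat
      - q ^ ((j + 1) * (6 * (j + 1) + 1)).toNat * q ^ (n - 3 * j - 1 - 1 : ℤ).toNat)
        * qBinom q (2 * n + 1) (n - 3 * j - 1 - 1) = 0 := by
    rcases eq_or_ne (qBinom q (2 * n + 1) (n - 3 * j - 1 - 1)) 0 with hG | hG
    · rw [hG, mul_zero]
    have := nonneg_and_le_of_qBinom_ne_zero hG
    obtain ⟨h₁, h₂⟩ := pent_exponent_nonneg (j + 1)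
    rw [sub_eq_zero.mpr (pow_toNat_mul_pow_toNat_eq q (pent_exponent_nonneg j).2 (by omega) h₁
      (by omega) (by ring)), zero_mul]
  linear_combination -q ^ ((2 * j + 1) * (3 * j + 2)).toNat * hP₂
    + q ^ ((j + 1) * (6 * (j + 1) + 1)).toNat * hP₁ - hcancel

theorem finsum_pentTerm (N : ℕ) : ∑ᶠ s, pentTerm q N s = 1 := by
  induction N with
  | zero =>
    rw [finsum_eq_single (pentTerm q 0) 0 fun s hs => by
      rw [pentTerm, qBinom_eq_zero (by omega), mul_zero]]
    simp [pentTerm, pent, qBinom]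
  | succ N ih =>
    rw [← ih, ← sub_eq_zero, ← finsum_sub_distrib (support_pentTerm_finite _)
      (support_pentTerm_finite _)]
    have hfin := ((support_pentTerm_finite (q := q) (N + 1)).union
      (support_pentTerm_finite (q := q) N)).subset (Function.support_sub _ _)
    obtain ⟨n, rfl | rfl⟩ := Nat.even_or_odd' N
    · exact finsum_eq_zero_of_pairs hfin 0 fun j => by
        simpa using pentTerm_pair_even hq n j
    · exact finsum_eq_zero_of_pairs hfin 1 fun j => by
        simpa [add_assoc] using pentTerm_pair_odd hq n j

end Pentagonal

theorem sum_range_three_mul {M : Type*} [AddCommMonoid M] (f : ℕ → M) (m : ℕ) :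
    ∑ t ∈ range (3 * m), f t
      = ∑ k ∈ range m, (f (3 * k) + f (3 * k + 1) + f (3 * k + 2)) := by
  induction m with
  | zero => simp
  | succ m ih =>
    rw [show 3 * (m + 1) = 3 * m + 1 + 1 + 1 by ring, sum_range_succ, sum_range_succ,
      sum_range_succ, ih, sum_range_succ, add_assoc, add_assoc, add_assoc]

theorem sum_Ico_two_mul {M : Type*} [AddCommMonoid M] (g : ℤ → M) (m : ℕ) :
    ∑ s ∈ Ico (-(2 * m : ℤ)) (2 * m), g s
      = ∑ k ∈ range m, (g (2 * k) + g (2 * k + 1) + (g (-(2 * k) - 1) + g (-(2 * k) - 2))) := by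
  induction m with
  | zero => simp
  | succ m ih =>
    have hsplit : Ico (-(2 * (m + 1 : ℕ) : ℤ)) (2 * (m + 1 : ℕ))
        = {2 * (m : ℤ), 2 * (m : ℤ) + 1, -(2 * (m : ℤ)) - 1, -(2 * (m : ℤ)) - 2}
          ∪ Ico (-(2 * m : ℤ)) (2 * m) := by
      ext s; simp only [mem_union, mem_insert, mem_singleton, mem_Ico]; push_cast; omega
    rw [hsplit, sum_union (by simp only [disjoint_left, mem_insert, mem_singleton, mem_Ico]; omega),
      ih, sum_range_succ, add_comm, sum_insert (by simp only [mem_insert, mem_singleton]; omega),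
      sum_insert (by simp only [mem_insert, mem_singleton]; omega),
      sum_insert (by simp only [mem_singleton]; omega), sum_singleton, add_assoc]

section Slater

variable {q : ℂ}

/-- The coefficient `c_m` of the Bailey pair. -/
noncomputable def slaterCoeff (q : ℂ) (m : ℕ) : ℂ :=
  if m % 3 = 0 then q ^ ((2 * m ^ 2 + m) / 3)
  else if m % 3 = 1 then -q ^ ((2 * m ^ 2 + m) / 3) else 0

theorem slaterCoeff_three_mul (k : ℕ) : slaterCoeff q (3 * k) = q ^ (k * (6 * k + 1)) := by
  rw [slaterCoeff, if_pos (by omega),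
    show 2 * (3 * k) ^ 2 + 3 * k = 3 * (k * (6 * k + 1)) by ring,
    Nat.mul_div_cancel_left _ three_pos]

theorem slaterCoeff_three_mul_add_one (k : ℕ) :
    slaterCoeff q (3 * k + 1) = -q ^ ((2 * k + 1) * (3 * k + 1)) := by
  rw [slaterCoeff, if_neg (by omega), if_pos (by omega),
    show 2 * (3 * k + 1) ^ 2 + (3 * k + 1) = 3 * ((2 * k + 1) * (3 * k + 1)) by ring,
    Nat.mul_div_cancel_left _ three_pos]

theorem slaterCoeff_three_mul_add_two (k : ℕ) : slaterCoeff q (3 * k + 2) = 0 := by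
  rw [slaterCoeff, if_neg (by omega), if_neg (by omega)]

end Slater

section BaileyPair

variable {q : ℂ} (hq : ‖q‖ < 1)
include hq

theorem sum_slaterCoeff_eq_finsum_pentTerm (n : ℕ) :
    ∑ t ∈ range (n + 1), slaterCoeff q t
        * (qBinom q (2 * n + 1) (n - t) - q ^ (2 * t + 2) * qBinom q (2 * n + 1) (n - t - 1))
      = ∑ᶠ s, pentTerm q (2 * n + 1) s := by
  have hsupp : Function.support (pentTerm q (2 * n + 1))
      ⊆ ↑(Ico (-(2 * (n + 1 : ℕ) : ℤ)) (2 * (n + 1 : ℕ))) := fun s hs => by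
    have := support_pentTerm_subset (2 * n + 1) hs
    simp only [Set.mem_Icc, coe_Ico, Set.mem_Ico] at this ⊢
    omega
  rw [finsum_eq_sum_of_support_subset _ hsupp, sum_Ico_two_mul,
    sum_subset (range_subset_range.mpr (by omega : n + 1 ≤ 3 * (n + 1))) ?vanish,
    sum_range_three_mul]
  case vanish =>
    intro t _ ht
    rw [mem_range] at ht
    rw [qBinom_eq_zero (by omega), qBinom_eq_zero (by omega), mul_zero, sub_zero, mul_zero]
  refine sum_congr rfl fun k _ => ?_
  have toNat_eq {z : ℤ} {m : ℕ} (h : z = m) : z.toNat = m := by omega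
  rw [slaterCoeff_three_mul, slaterCoeff_three_mul_add_one, slaterCoeff_three_mul_add_two,
    zero_mul, add_zero]
  -- `t = 3k` carries `s = 2k, 2k + 1`, and `t = 3k + 1` carries `s = -2k - 1, -2k - 2`
  congr 1
  · simp only [pentTerm, pent_two_mul, pent_two_mul_add_one]
    push_cast
    rw [toNat_eq (m := k * (6 * k + 1)) (by push_cast; ring),
      toNat_eq (m := (2 * k + 1) * (3 * k + 2)) (by push_cast; ring),
      show (2 * (n : ℤ) + 1 - 3 * (2 * k)) / 2 = n - 3 * k by omega,
      show (2 * (n : ℤ) + 1 - 3 * (2 * k + 1)) / 2 = n - 3 * k - 1 by omega,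
      show (2 * k + 1) * (3 * k + 2) = (2 * (3 * k) + 2) + k * (6 * k + 1) by ring, pow_add]
    ring
  · simp only [pentTerm]
    push_cast
    rw [show (2 * (n : ℤ) + 1 - 3 * (-(2 * k) - 1)) / 2
          = ((2 * n + 1 : ℕ) : ℤ) - (n - (3 * k + 1)) by push_cast; omega,
      show (2 * (n : ℤ) + 1 - 3 * (-(2 * k) - 2)) / 2
          = ((2 * n + 1 : ℕ) : ℤ) - (n - (3 * k + 1) - 1) by push_cast; omega,
      qBinom_symm hq, qBinom_symm hq, show -(2 * (k : ℤ)) - 1 = 2 * (-k - 1) + 1 by ring,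
      show -(2 * (k : ℤ)) - 2 = 2 * (-k - 1) by ring, pent_two_mul, pent_two_mul_add_one,
      toNat_eq (m := (2 * k + 1) * (3 * k + 1)) (by push_cast; ring),
      toNat_eq (m := (k + 1) * (6 * k + 5)) (by push_cast; ring),
      show (k + 1) * (6 * k + 5) = (2 * (3 * k + 1) + 2) + (2 * k + 1) * (3 * k + 1) by ring,
      pow_add]
    ring

theorem bailey_summand_eq (n t : ℕ) (ht : t ≤ n) (c : ℂ) :
    (1 - q ^ (2 * t + 2)) / (1 - q ^ 2) * c / (qPoch q q (n - t) * qPoch (q ^ 2 * q) q (n + t))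
      = c * (qBinom q (2 * n + 1) (n - t) - q ^ (2 * t + 2) * qBinom q (2 * n + 1) (n - t - 1))
        / qPoch (q ^ 2) q (2 * n) := by
  set G₁ := qBinom q (2 * n + 1) (n - t)
  set G₀ := qBinom q (2 * n + 1) (n - t - 1)
  set A := qPoch q q (n - t)
  set B := qPoch q q (n + t + 1)
  have hG : G₁ * (A * B) = qPoch q q (2 * n + 1) := by
    have := qBinom_mul_qPoch (q := q) (2 * n + 1) (n - t) (by omega)
    rwa [Nat.cast_sub ht, show 2 * n + 1 - (n - t) = n + t + 1 by omega] at this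
  have hX :
      (G₁ - q ^ (2 * t + 2) * G₀) * (1 - q ^ (n + t + 2)) = G₁ * (1 - q ^ (2 * t + 2)) := by
    have hratio := qBinom_sub_one_mul hq (2 * n + 1) (n - t) (by omega)
    rw [Nat.cast_sub ht, show 2 * n + 1 + 1 - (n - t) = n + t + 2 by omega] at hratio
    have hpow : q ^ (2 * t + 2) * q ^ (n - t) = q ^ (n + t + 2) := by
      rw [← pow_add]; congr 1; omega
    linear_combination (-q ^ (2 * t + 2)) * hratio + G₁ * hpow
  have hC : (1 - q) * (1 - q ^ 2) * qPoch (q ^ 2 * q) q (n + t) = B * (1 - q ^ (n + t + 2)) := by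
    have h := qPoch_add q q 2 (n + t)
    have h₂ : qPoch q q 2 = (1 - q) * (1 - q ^ 2) := by
      simp only [qPoch, prod_range_succ, prod_range_zero]; ring
    rwa [h₂, show q * q ^ 2 = q ^ 2 * q by ring, show 2 + (n + t) = n + t + 1 + 1 by omega,
      qPoch_succ q q (n + t + 1), ← pow_succ'] at h
  have hD : (1 - q) * qPoch (q ^ 2) q (2 * n) = qPoch q q (2 * n + 1) := by
    have h := qPoch_add q q 1 (2 * n)
    rwa [show qPoch q q 1 = 1 - q by simp [qPoch], pow_one, ← sq, add_comm 1] at h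
  have hsub {m : ℕ} (hm : m ≠ 0) : 1 - q ^ m ≠ 0 := one_sub_ne_zero_of_norm_lt_one <| by
    rw [norm_pow]; exact pow_lt_one₀ (norm_nonneg q) hq hm
  have hq2 : ‖q ^ 2‖ < 1 := by rw [norm_pow]; exact pow_lt_one₀ (norm_nonneg q) hq two_ne_zero
  have hq3 : ‖q ^ 2 * q‖ < 1 := by
    rw [norm_mul]; exact mul_lt_one_of_nonneg_of_lt_one_left (norm_nonneg _) hq2 hq.le
  rw [div_mul_eq_mul_div, div_div, div_eq_div_iff (mul_ne_zero (hsub two_ne_zero)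
    (mul_ne_zero (qPoch_ne_zero hq hq.le _) (qPoch_ne_zero hq3 hq.le _)))
    (qPoch_ne_zero hq2 hq.le _)]
  refine mul_left_cancel₀
    (mul_ne_zero (pow_one q ▸ hsub one_ne_zero) (hsub (m := n + t + 2) (by omega))) ?_
  linear_combination c * ((1 - q ^ (2 * t + 2)) * (1 - q ^ (n + t + 2)) * hD
    - (G₁ - q ^ (2 * t + 2) * G₀) * A * (1 - q ^ (n + t + 2)) * hC
    - (1 - q ^ (n + t + 2)) * ((1 - q ^ (2 * t + 2)) * hG + A * B * hX))

end BaileyPair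

theorem bailey_pair_2_general (q : ℂ) (hq1 : ‖q‖ < 1) :
    IsBaileyPair q (q ^ 2)
      (fun m => (1 - q ^ (2 * m + 2)) / (1 - q ^ 2) *
        (if m % 3 = 0 then q ^ ((2 * m ^ 2 + m) / 3)
          else if m % 3 = 1 then -q ^ ((2 * m ^ 2 + m) / 3) else 0))
      (fun n => 1 / qPoch (q ^ 2) q (2 * n)) := by
  intro n
  dsimp only
  conv_lhs => rw [← finsum_pentTerm hq1 (2 * n + 1), ← sum_slaterCoeff_eq_finsum_pentTerm hq1,
    sum_div]
  exact sum_congr rfl fun t ht =>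
    (bailey_summand_eq hq1 n t (Nat.lt_succ_iff.mp (mem_range.mp ht)) _).symm

theorem bailey_pair_2 (q : ℂ) (hq0 : 0 < ‖q‖) (hq1 : ‖q‖ < 1) :
    IsBaileyPair q (q ^ 2)
      (fun m => (1 - q ^ (2 * m + 2)) / (1 - q ^ 2) *
        (if m % 3 = 0 then q ^ ((2 * m ^ 2 + m) / 3)
          else if m % 3 = 1 then -q ^ ((2 * m ^ 2 + m) / 3) else 0))
      (fun n => 1 / qPoch (q ^ 2) q (2 * n)) :=
  bailey_pair_2_general q hq1
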